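/- For every integer n ≥ 1, the additive submonoid of ℤ × ℤ generated by the set {(n−k, k) : 0 ≤ k ≤ n} equals the set {(m, l) ∈ ℤ × ℤ : m ≥ 0, l ≥ 0, and n divides m + l}. -/

import Mathlib

/-!
The weights `(n - k, k)` are exactly the lattice points of the closed first quadrant on the line
`x + y = n`, so every finite sum of them lies in the quadrant and has coordinate sum divisible by
`n`. Conversely, a quadrant point `(x, y)` with coordinate sum `n (q + 1)` is the sum of the weight
`(n - k, k)` with `k = min y n` and a quadrant point with coordinate sum `n q`; induction on `q`
finishes.
-/

def symPowWeights (n : ℕ) : Set (ℤ × ℤ) :=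
  {p | ∃ k : ℕ, k ≤ n ∧ p = ((n : ℤ) - (k : ℤ), (k : ℤ))}

lemma mem_symPowWeights {n : ℕ} {p : ℤ × ℤ} :
    p ∈ symPowWeights n ↔ 0 ≤ p.1 ∧ 0 ≤ p.2 ∧ p.1 + p.2 = n := by
  constructor
  · rintro ⟨k, hk, rfl⟩
    simp only
    omega
  · rintro ⟨h₁, h₂, hsum⟩
    lift p.2 to ℕ using h₂ with k hk
    exact ⟨k, by omega, Prod.ext (by simp only; omega) hk.symm⟩

def quadrantDegreeMultiples (n : ℕ) : AddSubmonoid (ℤ × ℤ) where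
  carrier := {p | 0 ≤ p.1 ∧ 0 ≤ p.2 ∧ (n : ℤ) ∣ p.1 + p.2}
  zero_mem' := by simp
  add_mem' := by
    rintro ⟨a, b⟩ ⟨c, d⟩ ⟨ha, hb, hab⟩ ⟨hc, hd, hcd⟩
    refine ⟨add_nonneg ha hc, add_nonneg hb hd, ?_⟩
    simpa only [Prod.fst_add, Prod.snd_add, add_add_add_comm] using dvd_add hab hcd

lemma closure_symPowWeights_le (n : ℕ) :
    AddSubmonoid.closure (symPowWeights n) ≤ quadrantDegreeMultiples n :=
  AddSubmonoid.closure_le.mpr fun _ hp ↦ by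
    obtain ⟨h₁, h₂, hsum⟩ := mem_symPowWeights.mp hp
    exact ⟨h₁, h₂, hsum ▸ dvd_rfl⟩

lemma mem_closure_symPowWeights_of_add_eq_mul {n : ℕ} (q : ℕ) {a b : ℤ} (ha : 0 ≤ a)
    (hb : 0 ≤ b) (hab : a + b = n * q) : (a, b) ∈ AddSubmonoid.closure (symPowWeights n) := by
  induction q generalizing a b with
  | zero =>
    obtain ⟨rfl, rfl⟩ : a = 0 ∧ b = 0 := by simp only [CharP.cast_eq_zero, mul_zero] at hab; omega
    exact zero_mem _
  | succ q ih =>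
    replace hab : a + b = n * q + n := by rw [hab]; push_cast; ring
    have hnq : 0 ≤ (n : ℤ) * q := by positivity
    set k : ℤ := min b n
    have hweight : ((n : ℤ) - k, k) ∈ symPowWeights n :=
      mem_symPowWeights.mpr ⟨by omega, by omega, by ring⟩
    have hrest : (a - (n - k), b - k) ∈ AddSubmonoid.closure (symPowWeights n) :=
      ih (by omega) (by omega) (by linarith)
    have hsplit : (a, b) = ((n : ℤ) - k, k) + (a - (n - k), b - k) := by
      ext <;> simp
    exact hsplit ▸ add_mem (AddSubmonoid.subset_closure hweight) hrest

lemma quadrantDegreeMultiples_le_closure (n : ℕ) :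
    quadrantDegreeMultiples n ≤ AddSubmonoid.closure (symPowWeights n) := by
  rintro ⟨a, b⟩ ⟨ha, hb, hdvd⟩
  lift a to ℕ using ha
  lift b to ℕ using hb
  obtain ⟨q, hq⟩ : n ∣ a + b := Int.natCast_dvd_natCast.mp (by push_cast; exact hdvd)
  exact mem_closure_symPowWeights_of_add_eq_mul q (by positivity) (by positivity)
    (by exact_mod_cast hq)

theorem weights_span_symPow_general (n : ℕ) :
    (AddSubmonoid.closure {p : ℤ × ℤ | ∃ k : ℕ, k ≤ n ∧ p = ((n : ℤ) - (k : ℤ), (k : ℤ))} :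
        Set (ℤ × ℤ)) =
      {p : ℤ × ℤ | 0 ≤ p.1 ∧ 0 ≤ p.2 ∧ (n : ℤ) ∣ p.1 + p.2} :=
  congrArg SetLike.coe
    ((closure_symPowWeights_le n).antisymm (quadrantDegreeMultiples_le_closure n))

/-- For every integer `n ≥ 1`, the additive submonoid of `ℤ × ℤ` generated by the set
`{(n − k, k) : 0 ≤ k ≤ n}` equals `{(m, l) : m ≥ 0, l ≥ 0, n ∣ m + l}`. -/
theorem weights_span_symPow (n : ℕ) (hn : 1 ≤ n) :
    (AddSubmonoid.closure {p : ℤ × ℤ | ∃ k : ℕ, k ≤ n ∧ p = ((n : ℤ) - (k : ℤ), (k : ℤ))} :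
        Set (ℤ × ℤ)) =
      {p : ℤ × ℤ | 0 ≤ p.1 ∧ 0 ≤ p.2 ∧ (n : ℤ) ∣ p.1 + p.2} :=
  weights_span_symPow_general n
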